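/- Fix an integer N ≥ 2 and positive reals σ_1, …, σ_N. Define c_{k,l}(σ) := tr(ρA) − 2(ρAρ)_{kl}/ρ_{kl}, where A is the (N−1)×(N−1) symmetric tridiagonal matrix with A_{ii} = σ_i² + σ_{i+1}², A_{i,i+1} = A_{i+1,i} = −σ_{i+1}², A_{ij} = 0 for |i−j| ≥ 2, and ρ is the (N−1)×(N−1) matrix with ρ_{ij} = 2·min(i,j)·(N − max(i,j))/N. For a vector α = (α_1,…,α_M) ∈ ℝ^M and l = 1,…,M−1, define c_l(α) := −(2(M−1)/M)α_1² + (2(M+1)/M)·Σ_{p=2}^{l} α_p² + ((2(M−1)(M−l) − 4l)/((M−l)M))·Σ_{p=l+1}^{M} α_p². Then for all l = 1, …, N−1, we have c_{1,l}(σ) = c_l(σ), where c_l(σ) is computed with M = N and α = (σ_1,…,σ_N). -/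

import Mathlib

/-!
Writing the gaps as differences of particle positions, `A = Dᵀ diag(σ²) D` with `D` the
difference matrix, and `ρ` is twice the Green function of the discrete Dirichlet Laplacian on
`{0, …, N}`. Hence `Dρ` is the discrete derivative of the Green function, a piecewise constant
matrix, and
`tr(ρA) = ∑ₚ σₚ² (DρDᵀ)ₚₚ = 2(N-1)/N ∑ₚ σₚ²`, `(ρAρ)₁ₗ = ∑ₚ σₚ² (Dρ)ₚ₁ (Dρ)ₚₗ`.
The coefficient of `σₚ²` in `c_{1,l}` then only depends on whether `p = 1`, `2 ≤ p ≤ l` or `p > l`.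
-/

open Matrix Finset

section TransposeDiagonal

variable {m n R : Type*} [Fintype m] [DecidableEq m] [CommSemiring R]

theorem Matrix.transpose_mul_diagonal_mul_apply {k : Type*} (B : Matrix m n R) (s : m → R)
    (C : Matrix m k R) (i : n) (j : k) :
    (Bᵀ * diagonal s * C) i j = ∑ p, B p i * s p * C p j := by
  simp only [mul_apply, mul_diagonal (M := Bᵀ), transpose_apply]

variable [Fintype n]

theorem Matrix.trace_mul_transpose_diagonal_mul (ρ : Matrix n n R) (D : Matrix m n R)
    (s : m → R) :
    trace (ρ * (Dᵀ * diagonal s * D)) = ∑ p, s p * (D * ρ * Dᵀ) p p := by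
  rw [← Matrix.mul_assoc, trace_mul_comm]
  simp only [← Matrix.mul_assoc, trace, diag_apply, mul_diagonal, mul_comm]

theorem Matrix.mul_transpose_diagonal_mul_mul_apply {ρ : Matrix n n R} (hρ : ρᵀ = ρ)
    (D : Matrix m n R) (s : m → R) (i j : n) :
    (ρ * (Dᵀ * diagonal s * D) * ρ) i j = ∑ p, (D * ρ) p i * s p * (D * ρ) p j := by
  rw [← transpose_mul_diagonal_mul_apply, transpose_mul, hρ]
  simp only [Matrix.mul_assoc]

end TransposeDiagonal

theorem Fin.sum_ite_val_eq {R : Type*} [AddCommMonoid R] {M n : ℕ} (h : n < M) (g : Fin M → R) :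
    ∑ p : Fin M, (if n = (p : ℕ) then g p else 0) = g ⟨n, h⟩ := by
  simp_rw [fun p : Fin M => (Fin.ext_iff (a := ⟨n, h⟩) (b := p)).symm]
  simp

theorem Fin.sum_eq_zero_add_sum_le_add_sum_gt {R : Type*} [AddCommMonoid R] {N : ℕ} (h : 0 < N)
    (l : ℕ) (f : Fin N → R) :
    ∑ p, f p = f ⟨0, h⟩ + ∑ p ∈ univ.filter fun p : Fin N => 1 ≤ p.1 ∧ p.1 ≤ l, f p
      + ∑ p ∈ univ.filter fun p : Fin N => l < p.1, f p := by
  rw [sum_filter, sum_filter, ← Fin.sum_ite_val_eq h f, ← sum_add_distrib, ← sum_add_distrib]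
  refine sum_congr rfl fun p _ => ?_
  split_ifs <;> first | (exfalso; omega) | simp

/-- Column `i` is `e_{i+1} - e_i`: the `i`-th gap in terms of the particle positions. -/
def diffMatrix (N : ℕ) : Matrix (Fin N) (Fin (N - 1)) ℝ :=
  of fun p i => (if (i : ℕ) + 1 = p then 1 else 0) - (if (i : ℕ) = p then 1 else 0)

noncomputable def greenKernel (N a b : ℕ) : ℝ :=
  2 * (min a b : ℕ) * ((N : ℝ) - (max a b : ℕ)) / N

noncomputable def greenMatrix (N : ℕ) : Matrix (Fin (N - 1)) (Fin (N - 1)) ℝ :=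
  of fun i j => greenKernel N (i + 1) (j + 1)

def gapCovariance (N : ℕ) (σ : Fin N → ℝ) : Matrix (Fin (N - 1)) (Fin (N - 1)) ℝ := fun i j =>
  if i = j then
    σ ⟨i.1, by have := i.isLt; omega⟩ ^ 2 + σ ⟨i.1 + 1, by have := i.isLt; omega⟩ ^ 2
  else if i.1 + 1 = j.1 ∨ j.1 + 1 = i.1 then
    -σ ⟨max i.1 j.1, by have := i.isLt; have := j.isLt; omega⟩ ^ 2
  else 0

variable {N : ℕ}

theorem sum_diffMatrix_mul (F : ℕ → ℝ) (h0 : F 0 = 0) (hN : F N = 0) (p : Fin N) :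
    ∑ j : Fin (N - 1), diffMatrix N p j * F (j + 1) = F p - F (p + 1) := by
  have hsum : ∀ n < N, ∑ j : Fin (N - 1), (if (j : ℕ) = n then F (j + 1) else 0) = F (n + 1) := by
    intro n hn
    rw [Fin.sum_univ_eq_sum_range (fun j => if j = n then F (j + 1) else 0), sum_ite_eq']
    simp only [mem_range]
    split_ifs with h
    · rfl
    · rw [show n + 1 = N by omega, hN]
  simp only [diffMatrix, of_apply, sub_mul, ite_mul, one_mul, zero_mul, sum_sub_distrib,
    hsum p p.isLt]
  by_cases hp : (p : ℕ) = 0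
  · simp [hp, h0]
  · obtain ⟨q, hq⟩ := Nat.exists_eq_succ_of_ne_zero hp
    simp only [hq, Nat.succ_eq_add_one, Nat.add_right_cancel_iff, hsum q (by omega)]

theorem gapCovariance_eq (σ : Fin N → ℝ) :
    gapCovariance N σ = (diffMatrix N)ᵀ * diagonal (fun p => σ p ^ 2) * diffMatrix N := by
  ext i j
  have hi := i.isLt
  have hj := j.isLt
  simp only [transpose_mul_diagonal_mul_apply, diffMatrix, of_apply, sub_mul, ite_mul, one_mul,
    zero_mul, sum_sub_distrib, Fin.sum_ite_val_eq (by omega : (i : ℕ) + 1 < N),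
    Fin.sum_ite_val_eq (by omega : (i : ℕ) < N)]
  obtain h | h | h | h : (j : ℕ) = i ∨ (j : ℕ) = i + 1 ∨ (i : ℕ) = j + 1 ∨
      ((j : ℕ) ≠ i ∧ (j : ℕ) ≠ i + 1 ∧ (i : ℕ) ≠ j + 1) := by omega
  all_goals
    simp only [gapCovariance, Fin.ext_iff, h, Nat.add_right_cancel_iff,
      Nat.left_eq_add, Nat.add_eq_left, one_ne_zero, true_or, or_true, le_add_iff_nonneg_right,
      zero_le, sup_of_le_left, sup_of_le_right, ↓reduceIte]
    (try split_ifs) <;> first | (exfalso; omega) | ring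

theorem greenKernel_sub_succ (N p b : ℕ) :
    greenKernel N p b - greenKernel N (p + 1) b
      = if p < b then -(2 * ((N : ℝ) - b) / N) else 2 * (b : ℝ) / N := by
  unfold greenKernel
  split_ifs with h
  · rw [Nat.min_eq_left h.le, Nat.max_eq_right h.le, Nat.min_eq_left h, Nat.max_eq_right h]
    push_cast
    ring
  · rw [Nat.min_eq_right (not_lt.1 h), Nat.max_eq_left (not_lt.1 h),
      Nat.min_eq_right (by omega), Nat.max_eq_left (by omega)]
    push_cast
    ring

theorem greenMatrix_transpose : (greenMatrix N)ᵀ = greenMatrix N := by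
  ext i j
  simp only [greenMatrix, greenKernel, transpose_apply, of_apply, min_comm, max_comm]

theorem greenMatrix_apply_zero_left (h : 0 < N - 1) (l : Fin (N - 1)) :
    greenMatrix N ⟨0, h⟩ l = 2 * ((N : ℝ) - ((l : ℝ) + 1)) / N := by
  simp [greenMatrix, greenKernel]

theorem diffMatrix_mul_greenMatrix_apply (p : Fin N) (m : Fin (N - 1)) :
    (diffMatrix N * greenMatrix N) p m
      = if (p : ℕ) < m + 1 then -(2 * ((N : ℝ) - (m + 1 : ℕ)) / N)
        else 2 * ((m + 1 : ℕ) : ℝ) / N := by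
  rw [mul_apply, ← greenKernel_sub_succ]
  refine sum_diffMatrix_mul (fun a => greenKernel N a (m + 1)) ?_ ?_ p
  · simp [greenKernel]
  · simp [greenKernel, Nat.max_eq_left (by omega : (m : ℕ) + 1 ≤ N)]

theorem diffMatrix_mul_greenMatrix_mul_transpose_apply_self (p : Fin N) :
    (diffMatrix N * greenMatrix N * (diffMatrix N)ᵀ) p p = 2 * ((N : ℝ) - 1) / N := by
  let F : ℕ → ℝ := fun a => if (p : ℕ) < a then -(2 * ((N : ℝ) - a) / N) else 2 * (a : ℝ) / N
  rw [mul_apply]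
  simp only [transpose_apply, diffMatrix_mul_greenMatrix_apply p, mul_comm _ (diffMatrix N p _)]
  rw [sum_diffMatrix_mul F (by simp [F]) (by simp [F]) p]
  simp only [F, lt_irrefl, if_false, lt_add_one, if_true]
  push_cast
  ring

/-- First-row case: `c_{1,l}(σ) = c_l(σ)`, where
`c_{k,l}(σ) := tr(ρA) − 2 (ρAρ)_{kl} / ρ_{kl}` and
`c_l(α) := −(2(N−1)/N) α_1² + (2(N+1)/N) ∑_{p=2}^{l} α_p²
          + ((2(N−1)(N−l) − 4l)/((N−l)N)) ∑_{p=l+1}^{N} α_p²`. -/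
theorem ckl_first_row (N : ℕ) (hN : 2 ≤ N) (σ : Fin N → ℝ) :
    let A : Matrix (Fin (N - 1)) (Fin (N - 1)) ℝ := fun i j =>
      if i = j then
        σ ⟨i.1, by have := i.isLt; omega⟩ ^ 2 + σ ⟨i.1 + 1, by have := i.isLt; omega⟩ ^ 2
      else if i.1 + 1 = j.1 ∨ j.1 + 1 = i.1 then
        -σ ⟨max i.1 j.1, by have := i.isLt; have := j.isLt; omega⟩ ^ 2
      else 0
    let ρ : Matrix (Fin (N - 1)) (Fin (N - 1)) ℝ := fun i j =>
      2 * (min (i.1 + 1) (j.1 + 1) : ℕ) * ((N : ℝ) - (max (i.1 + 1) (j.1 + 1) : ℕ)) / N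
    -- `c α l` is the quantity `c_l(α)` of the paper, with `M = N` (indices 1-based)
    let c : (Fin N → ℝ) → Fin (N - 1) → ℝ := fun α l =>
      -(2 * ((N : ℝ) - 1) / N) * α ⟨0, by omega⟩ ^ 2
        + 2 * ((N : ℝ) + 1) / N *
          (∑ p ∈ Finset.univ.filter fun p : Fin N => 1 ≤ p.1 ∧ p.1 ≤ l.1, α p ^ 2)
        + (2 * ((N : ℝ) - 1) * ((N : ℝ) - ((l.1 : ℝ) + 1)) - 4 * ((l.1 : ℝ) + 1)) /
          (((N : ℝ) - ((l.1 : ℝ) + 1)) * N) *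
          (∑ p ∈ Finset.univ.filter fun p : Fin N => l.1 < p.1, α p ^ 2)
    ∀ l : Fin (N - 1),
      Matrix.trace (ρ * A) - 2 * (ρ * A * ρ) ⟨0, by omega⟩ l / ρ ⟨0, by omega⟩ l
        = c σ l := by
  intro A ρ c l
  have hA : A = (diffMatrix N)ᵀ * diagonal (fun p => σ p ^ 2) * diffMatrix N := gapCovariance_eq σ
  have hρ : ρ = greenMatrix N := rfl
  have hN0 : (N : ℝ) ≠ 0 := by positivity
  have hNl : (N : ℝ) - ((l : ℝ) + 1) ≠ 0 := by
    have : (l : ℝ) + 1 < N := by exact_mod_cast (by omega : (l : ℕ) + 1 < N)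
    linarith
  rw [hA, hρ, trace_mul_transpose_diagonal_mul,
    mul_transpose_diagonal_mul_mul_apply greenMatrix_transpose, greenMatrix_apply_zero_left]
  simp only [diffMatrix_mul_greenMatrix_mul_transpose_apply_self, diffMatrix_mul_greenMatrix_apply]
  rw [mul_sum, sum_div, ← sum_sub_distrib, Fin.sum_eq_zero_add_sum_le_add_sum_gt (by omega) l]
  simp only [c, mul_sum]
  refine congrArg₂ (· + ·) (congrArg₂ (· + ·) ?_ (sum_congr rfl fun p hp => ?_))
    (sum_congr rfl fun p hp => ?_)
  · rw [if_pos (by omega), if_pos (by omega)]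
    push_cast
    field_simp
    ring
  · rw [mem_filter] at hp
    rw [if_neg (by omega), if_pos (by omega)]
    push_cast
    field_simp
    ring
  · rw [mem_filter] at hp
    rw [if_neg (by omega), if_neg (by omega)]
    push_cast
    field_simp
    ring
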